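/- arXiv:1910.11166 — 3 statements merged into one kernel-verified Lean document; each statement's English description precedes it below -/
import Mathlib

section
/- With the cyclic setup in the context (intervals I_{α₁},…,I_{α_k} ⊆ C_k permuted cyclically by σ, and p jump points added into each, with 𝒜 and 𝒜_S invariant under σ and σ⁻¹), the set C_k decomposes as C_k = ⋃_{l=1}^{p+1} C̃_{k·l}. -/
open scoped Classical

noncomputable section

namespace PaperTRS

/-- The algebra of complex valued functions constant on each set of the family `P`. -/
def partAlg {X J : Type*} (P : J → Set X) : Subalgebra ℂ (X → ℂ) where
  carrier := {h | ∀ i, ∀ x ∈ P i, ∀ y ∈ P i, h x = h y}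
  mul_mem' := by
    intro a b ha hb i x hx y hy
    simp only [Pi.mul_apply, ha i x hx y hy, hb i x hx y hy]
  add_mem' := by
    intro a b ha hb i x hx y hy
    simp only [Pi.add_apply, ha i x hx y hy, hb i x hx y hy]
  algebraMap_mem' := by intro r i x hx y hy; rfl

/-- Piecewise constant functions on `ℝ` whose jumps all lie in the set `T`. -/
def pcAlgOn (T : Set ℝ) : Subalgebra ℂ (ℝ → ℂ) where
  carrier := {h | ∀ x y : ℝ, x ∉ T → y ∉ T →
    (∀ u ∈ T, u ∉ Set.Icc (min x y) (max x y)) → h x = h y}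
  mul_mem' := by
    intro a b ha hb x y hx hy hxy
    simp only [Pi.mul_apply, ha x y hx hy hxy, hb x y hx hy hxy]
  add_mem' := by
    intro a b ha hb x y hx hy hxy
    simp only [Pi.add_apply, ha x y hx hy hxy, hb x y hx hy hxy]
  algebraMap_mem' := by intro r x y _ _ _; rfl

/-- Invariance of an algebra of functions under a self-map of `X`. -/
def AlgInvariant {X : Type*} (A : Subalgebra ℂ (X → ℂ)) (σ : X → X) : Prop :=
  ∀ h ∈ A, (h ∘ σ) ∈ A

/-- `Sep A σ n = {x | ∃ h ∈ A, h x ≠ σ̃ⁿ(h) x}`, where `σ̃ⁿ(h) = h ∘ σ⁻ⁿ`. -/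
def Sep {X : Type*} (A : Subalgebra ℂ (X → ℂ)) (σ : Equiv.Perm X) (n : ℤ) : Set X :=
  {x | ∃ h ∈ A, h x ≠ h ((σ ^ n)⁻¹ x)}

/-- Twisted convolution product on the crossed product `⋊ ℤ`:
`(fₙ δⁿ) * (gₘ δᵐ) = fₙ · σ̃ⁿ(gₘ) · δ^{n+m}` extended bilinearly. -/
def cmul {X : Type*} (σ : Equiv.Perm X) (f g : ℤ →₀ (X → ℂ)) : ℤ →₀ (X → ℂ) :=
  f.sum fun n a => g.sum fun m b =>
    Finsupp.single (n + m) (fun x => a x * b ((σ ^ n)⁻¹ x))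

/-- Membership of an element `Σ fₙ δⁿ` in the crossed product of the algebra `B` with `ℤ`. -/
def InCrossed {X : Type*} (B : Subalgebra ℂ (X → ℂ)) (f : ℤ →₀ (X → ℂ)) : Prop :=
  ∀ n, f n ∈ B

/-- The commutant of `A` inside the crossed product `B ⋊ ℤ` (where `A ⊆ B`). -/
def commutant {X : Type*} (A B : Subalgebra ℂ (X → ℂ)) (σ : Equiv.Perm X) :
    Set (ℤ →₀ (X → ℂ)) :=
  {f | InCrossed B f ∧
    ∀ a ∈ A, cmul σ f (Finsupp.single 0 a) = cmul σ (Finsupp.single 0 a) f}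

/-- The jump points `t₁ < ⋯ < t_N` extended by `t₀ = -∞` and `t_{N+1} = +∞`. -/
def tE (N : ℕ) (t : Fin N → ℝ) (i : ℕ) : EReal :=
  if h : 1 ≤ i ∧ i ≤ N then ((t ⟨i - 1, by omega⟩ : ℝ) : EReal)
  else if i = 0 then ⊥ else ⊤

/-- The open interval `I_i = (t_i, t_{i+1})` for `0 ≤ i ≤ N`. -/
def openPiece (N : ℕ) (t : Fin N → ℝ) (i : ℕ) : Set ℝ :=
  {x : ℝ | tE N t i < (x : EReal) ∧ (x : EReal) < tE N t (i + 1)}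

/-- The sets of the partition of `ℝ` determined by the jump points: the open
intervals `I_0, …, I_N` together with the singletons `{t_i}`. -/
def pieces (N : ℕ) (t : Fin N → ℝ) : Set (Set ℝ) :=
  {P | (∃ i : ℕ, i ≤ N ∧ P = openPiece N t i) ∨ (∃ i : Fin N, P = {t i})}

/-- `C_k`: points `x` such that `k` is the smallest positive integer with `x` and
`σᵏ(x)` in one common set of the partition. -/
def Ck (N : ℕ) (t : Fin N → ℝ) (σ : Equiv.Perm ℝ) (k : ℕ) : Set ℝ :=
  {x | IsLeast {j : ℕ | 0 < j ∧ ∃ P ∈ pieces N t, x ∈ P ∧ (σ ^ j) x ∈ P} k}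

end PaperTRS
namespace PaperTRS

/-- With `p` points `s i 0 < ⋯ < s i (p-1)` added in the interval `I_{α i}`, the `j`-th
open subinterval of the refined partition of `I_{α i}`, for `j = 0, …, p`. -/
def subPiece (N : ℕ) (t : Fin N → ℝ) {k p : ℕ} (α : Fin k → ℕ)
    (s : Fin k → Fin p → ℝ) (i : Fin k) (j : Fin (p + 1)) : Set ℝ :=
  {x : ℝ |
    (if hj : (j : ℕ) = 0 then tE N t (α i)
      else ((s i ⟨(j : ℕ) - 1, by have := j.isLt; omega⟩ : ℝ) : EReal)) < (x : EReal) ∧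
    (x : EReal) <
      (if hj : (j : ℕ) = p then tE N t (α i + 1)
        else ((s i ⟨(j : ℕ), by have := j.isLt; omega⟩ : ℝ) : EReal))}

/-- The sets of the refined partition of the union of the intervals `I_{α i}`: the open
subintervals determined by the added jump points together with the singleton jump points. -/
def cyclePieces (N : ℕ) (t : Fin N → ℝ) {k p : ℕ} (α : Fin k → ℕ)
    (s : Fin k → Fin p → ℝ) : Set (Set ℝ) :=
  {P | (∃ i j, P = subPiece N t α s i j) ∨ (∃ i j, P = ({s i j} : Set ℝ))}

/-- `C̃_r`: points `x` of `⋃ᵢ I_{α i}` such that `r` is the smallest positive integer with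
`x` and `σʳ(x)` in one common set of the refined partition. -/
def Ctil (N : ℕ) (t : Fin N → ℝ) (σ : Equiv.Perm ℝ) {k p : ℕ} (α : Fin k → ℕ)
    (s : Fin k → Fin p → ℝ) (r : ℕ) : Set ℝ :=
  {x | x ∈ ⋃ i, openPiece N t (α i) ∧
    IsLeast {j : ℕ | 0 < j ∧ ∃ P ∈ cyclePieces N t α s, x ∈ P ∧ (σ ^ j) x ∈ P} r}

/-- The cyclic setup: `k` pairwise distinct open intervals `I_{α 0}, …, I_{α (k-1)}` of the
original partition, contained in `C_k` and permuted cyclically by `σ`, with `p` jump points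
`s i 0 < ⋯ < s i (p-1)` added into each of them, and both the original algebra `𝒜` and the
refined algebra `𝒜_S` invariant under `σ` and `σ⁻¹`. -/
def CyclicSetup (N : ℕ) (t : Fin N → ℝ) (σ : Equiv.Perm ℝ) {k p : ℕ} (α : Fin k → ℕ)
    (s : Fin k → Fin p → ℝ) : Prop :=
  0 < k ∧ (∀ i, α i ≤ N) ∧ Function.Injective α ∧
  (∀ i j, s i j ∈ openPiece N t (α i)) ∧ (∀ i, StrictMono (s i)) ∧
  (∀ i : Fin k, ∃ i' : Fin k, ((i' : ℕ) = ((i : ℕ) + 1) % k) ∧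
    σ '' openPiece N t (α i) = openPiece N t (α i')) ∧
  (∀ i, openPiece N t (α i) ⊆ Ck N t σ k) ∧
  AlgInvariant (pcAlgOn (Set.range t)) σ ∧
  AlgInvariant (pcAlgOn (Set.range t)) σ.symm ∧
  AlgInvariant (pcAlgOn (Set.range t ∪ ⋃ i, Set.range (s i))) σ ∧
  AlgInvariant (pcAlgOn (Set.range t ∪ ⋃ i, Set.range (s i))) σ.symm

/-- `C_k` for the partition `P` of a general set `X`. -/
def CkGen {X ι : Type*} (P : ι → Set X) (σ : Equiv.Perm X) (k : ℕ) : Set X :=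
  {x | IsLeast {j : ℕ | 0 < j ∧ ∃ i, x ∈ P i ∧ (σ ^ j) x ∈ P i} k}

/-- `C̃_r` relative to a family `Q` of refined pieces inside the subset `base` of `X`. -/
def CtilGen {X ι : Type*} (σ : Equiv.Perm X) (Q : ι → Set X) (base : Set X) (r : ℕ) :
    Set X :=
  {x | x ∈ base ∧ IsLeast {j : ℕ | 0 < j ∧ ∃ i, x ∈ Q i ∧ (σ ^ j) x ∈ Q i} r}

/-- `C_∞`: points that never return to the partition set they lie in. -/
def Cinf {X ι : Type*} (P : ι → Set X) (σ : Equiv.Perm X) : Set X :=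
  {x | ∀ k : ℕ, 0 < k → ¬∃ i, x ∈ P i ∧ (σ ^ k) x ∈ P i}

end PaperTRS

/-!
Every refined piece lies in one of the intervals `I_{α i}`, which `σ` permutes cyclically, so
every return time of a point to its refined piece is a multiple of `k`. The refined jump set `T`
is finite and `σ`, `σ⁻¹` preserve the relation "no function of `𝒜_S` separates `x` and `y`",
whose classes are the points of `T` and the open intervals between them. Hence `σᵏ` maps
`I_{α i}` to itself, permuting its `p` added jump points and its `p + 1` open subintervals; by
pigeonhole, some `σ^{k l}` with `1 ≤ l ≤ p + 1` returns `x` to its refined piece.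
-/

namespace PaperTRS

open Function

section Cyclic

variable {X : Type*} {σ : Equiv.Perm X} {k : ℕ} {A : Fin k → Set X}

def PermutesCyclically (σ : Equiv.Perm X) (A : Fin k → Set X) : Prop :=
  ∀ i : Fin k, ∃ i' : Fin k, (i' : ℕ) = (i + 1) % k ∧ σ '' A i = A i'

theorem PermutesCyclically.image_pow (hcyc : PermutesCyclically σ A) (m : ℕ) (i : Fin k) :
    ∃ i' : Fin k, (i' : ℕ) = (i + m) % k ∧ (σ ^ m) '' A i = A i' := by
  induction m generalizing i with
  | zero => exact ⟨i, (Nat.mod_eq_of_lt i.isLt).symm, by simp⟩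
  | succ m ih =>
    obtain ⟨i₁, hi₁, hσi⟩ := hcyc i
    obtain ⟨i₂, hi₂, hσi₁⟩ := ih i₁
    refine ⟨i₂, ?_, ?_⟩
    · rw [hi₂, hi₁, Nat.mod_add_mod, add_assoc, add_comm 1]
    · rw [pow_succ, Equiv.Perm.coe_mul, Set.image_comp, hσi, hσi₁]

theorem PermutesCyclically.dvd_of_mem_of_pow_apply_mem (hcyc : PermutesCyclically σ A)
    (hdisj : Pairwise (Disjoint on A))
    {x : X} {i : Fin k} {m : ℕ} (hx : x ∈ A i) (hm : (σ ^ m) x ∈ A i) : k ∣ m := by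
  obtain ⟨i', hi', himage⟩ := hcyc.image_pow m i
  obtain rfl : i = i' := by
    by_contra hne
    exact (hdisj hne).notMem_of_mem_left hm (himage ▸ Set.mem_image_of_mem (σ ^ m) hx)
  have : i + m ≡ i + 0 [MOD k] := by
    rw [Nat.ModEq, ← hi', Nat.add_zero, Nat.mod_eq_of_lt i.isLt]
  exact (Nat.modEq_zero_iff_dvd).mp (Nat.ModEq.add_left_cancel' _ this)

theorem PermutesCyclically.pow_mul_apply_mem (hcyc : PermutesCyclically σ A)
    {x : X} {i : Fin k} (hx : x ∈ A i) (m : ℕ) : (σ ^ (k * m)) x ∈ A i := by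
  obtain ⟨i', hi', himage⟩ := hcyc.image_pow (k * m) i
  obtain rfl : i = i' := Fin.ext (by rw [hi', Nat.add_mul_mod_self_left, Nat.mod_eq_of_lt i.isLt])
  exact himage ▸ Set.mem_image_of_mem (σ ^ (k * m)) hx

end Cyclic

theorem exists_pos_le_rel_pow_apply {X : Type*} {r : X → X → Prop} {f : Equiv.Perm X}
    (hf : ∀ y z, r (f y) (f z) → r y z) {x : X} {q : ℕ} (c : ℕ → Fin q)
    (hc : ∀ u v, c u = c v → r ((f ^ u) x) ((f ^ v) x)) :
    ∃ l, 0 < l ∧ l ≤ q ∧ r x ((f ^ l) x) := by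
  have hcancel : ∀ n y z, r ((f ^ n) y) ((f ^ n) z) → r y z := by
    intro n
    induction n with
    | zero => exact fun y z h => h
    | succ n ih =>
      intro y z h
      rw [pow_succ', Equiv.Perm.mul_apply, Equiv.Perm.mul_apply] at h
      exact ih y z (hf _ _ h)
  obtain ⟨a, b, hab, hcab⟩ :=
    Fintype.exists_ne_map_eq_of_card_lt (fun m : Fin (q + 1) => c m) (by simp)
  wlog hlt : a < b generalizing a b
  · exact this b a hab.symm hcab.symm (hab.lt_or_gt.resolve_left hlt)
  refine ⟨b - a, by omega, by omega, hcancel a _ _ ?_⟩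
  rw [← Equiv.Perm.mul_apply, ← pow_add, Nat.add_sub_cancel' hlt.le]
  exact hc a b hcab

theorem exists_isLeast_mul_of_forall_dvd {S : Set ℕ} {k l : ℕ}
    (hS : ∀ m ∈ S, 0 < m ∧ k ∣ m) (hl : k * l ∈ S) :
    ∃ l', 0 < l' ∧ l' ≤ l ∧ IsLeast S (k * l') := by
  have hmem : sInf S ∈ S := Nat.sInf_mem ⟨_, hl⟩
  obtain ⟨hpos, l', hl'⟩ := hS _ hmem
  have hk : 0 < k := Nat.pos_of_mul_pos_right (hS _ hl).1
  refine ⟨l', Nat.pos_of_mul_pos_left (hl' ▸ hpos), ?_, hl' ▸ ⟨hmem, fun _ hm => Nat.sInf_le hm⟩⟩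
  exact Nat.le_of_mul_le_mul_left (hl' ▸ Nat.sInf_le hl) hk

def PcInseparable (T : Set ℝ) (x y : ℝ) : Prop := ∀ h ∈ pcAlgOn T, h x = h y

section PcInseparable

variable {T : Set ℝ} {x y : ℝ}

theorem pcInseparable_apply_iff {σ : Equiv.Perm ℝ} (hσ : AlgInvariant (pcAlgOn T) σ)
    (hσsymm : AlgInvariant (pcAlgOn T) σ.symm) :
    PcInseparable T (σ x) (σ y) ↔ PcInseparable T x y :=
  ⟨fun h g hg => by simpa using h _ (hσsymm g hg), fun h g hg => h _ (hσ g hg)⟩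

theorem pcInseparable_pow_apply_iff {σ : Equiv.Perm ℝ} (hσ : AlgInvariant (pcAlgOn T) σ)
    (hσsymm : AlgInvariant (pcAlgOn T) σ.symm) (m : ℕ) :
    PcInseparable T ((σ ^ m) x) ((σ ^ m) y) ↔ PcInseparable T x y := by
  induction m generalizing x y with
  | zero => rfl
  | succ m ih =>
    rw [pow_succ', Equiv.Perm.mul_apply, Equiv.Perm.mul_apply,
      pcInseparable_apply_iff hσ hσsymm, ih]

theorem eq_of_pcInseparable (hx : x ∈ T) (h : PcInseparable T x y) : y = x := by
  by_contra hne
  have hind : (fun z => if z = x then (1 : ℂ) else 0) ∈ pcAlgOn T := by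
    intro a b ha hb _
    simp only [if_neg (ne_of_mem_of_not_mem hx ha).symm, if_neg (ne_of_mem_of_not_mem hx hb).symm]
  simpa [hne] using h _ hind

theorem not_pcInseparable_of_lt_of_lt {c : ℝ} (hc : c ∈ T) (hxc : x < c) (hcy : c < y) :
    ¬PcInseparable T x y := by
  have hind : (fun z => if c < z then (1 : ℂ) else 0) ∈ pcAlgOn T := by
    intro a b _ _ hab
    have := hab c hc
    simp only [Set.mem_Icc, not_and_or, not_le, lt_min_iff, max_lt_iff] at this
    rcases this with hlt | hlt
    · simp [hlt.1, hlt.2]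
    · simp [hlt.1.not_gt, hlt.2.not_gt]
  intro h
  simpa [hxc.not_gt, hcy] using h _ hind

theorem pcInseparable_of_ordConnected {C : Set ℝ} (hC : C.OrdConnected) (hCT : Disjoint C T)
    (hx : x ∈ C) (hy : y ∈ C) : PcInseparable T x y :=
  fun _ hh => hh x y (hCT.notMem_of_mem_left hx) (hCT.notMem_of_mem_left hy)
    fun _ hu hmem => hCT.notMem_of_mem_right hu (hC.uIcc_subset hx hy hmem)

theorem exists_ne_pcInseparable (hT : T.Finite) (hx : x ∉ T) :
    ∃ y ≠ x, PcInseparable T x y := by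
  obtain ⟨ε, hε, hball⟩ := Metric.isOpen_iff.mp hT.isClosed.isOpen_compl x hx
  rw [Real.ball_eq_Ioo] at hball
  refine ⟨x + ε / 2, by linarith, pcInseparable_of_ordConnected Set.ordConnected_Ioo
    (Set.subset_compl_iff_disjoint_right.mp hball) ?_ ?_⟩ <;>
  constructor <;> linarith

theorem apply_mem_iff_of_pcInseparable (hT : T.Finite) {f : Equiv.Perm ℝ}
    (hf : ∀ y z, PcInseparable T (f y) (f z) ↔ PcInseparable T y z) : f x ∈ T ↔ x ∈ T := by
  constructor
  · intro hfx
    by_contra hx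
    obtain ⟨y, hyx, hxy⟩ := exists_ne_pcInseparable hT hx
    exact hyx (f.injective (eq_of_pcInseparable hfx ((hf x y).mpr hxy)))
  · intro hx
    by_contra hfx
    obtain ⟨z, hzx, hxz⟩ := exists_ne_pcInseparable hT hfx
    rw [← f.apply_symm_apply z, hf] at hxz
    exact hzx (by rw [← eq_of_pcInseparable hx hxz, f.apply_symm_apply])

end PcInseparable

theorem exists_lt_lt_succ_of_forall_ne {β : Type*} [LinearOrder β] (b : ℕ → β) {x : β} {n : ℕ}
    (h0 : b 0 < x) (hn : x < b n) (hne : ∀ m, x ≠ b m) : ∃ j < n, b j < x ∧ x < b (j + 1) := by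
  induction n with
  | zero => exact absurd (h0.trans hn) (lt_irrefl _)
  | succ n ih =>
    rcases (hne n).lt_or_gt with h | h
    · obtain ⟨j, hj, hb⟩ := ih h
      exact ⟨j, by omega, hb⟩
    · exact ⟨n, by omega, h, hn⟩

section Geometry

variable {N : ℕ} {t : Fin N → ℝ} {k p : ℕ} {α : Fin k → ℕ} {s : Fin k → Fin p → ℝ}

theorem tE_mono (ht : StrictMono t) : Monotone (tE N t) := by
  intro a b hab
  unfold tE
  split_ifs <;> first
    | exact EReal.coe_le_coe_iff.mpr (ht.monotone (Fin.mk_le_mk.mpr (by omega)))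
    | exact le_top | exact bot_le | exact le_rfl | omega

theorem disjoint_openPiece (ht : StrictMono t) {a b : ℕ} (hab : a ≠ b) :
    Disjoint (openPiece N t a) (openPiece N t b) := by
  wlog hlt : a < b generalizing a b
  · exact (this hab.symm (hab.lt_or_gt.resolve_left hlt)).symm
  exact Set.disjoint_left.mpr fun x hxa hxb =>
    ((hxa.2.trans_le (tE_mono ht hlt)).trans hxb.1).false

theorem pairwise_disjoint_openPiece (ht : StrictMono t) (hα : Injective α) :
    Pairwise (Disjoint on fun i => openPiece N t (α i)) :=
  fun _ _ hij => disjoint_openPiece ht (hα.ne hij)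

theorem t_notMem_openPiece (ht : StrictMono t) (m : Fin N) (a : ℕ) : t m ∉ openPiece N t a := by
  have htE : tE N t (m + 1) = t m := by simp [tE]
  intro hx
  rcases le_or_gt (m + 1 : ℕ) a with h | h
  · exact (tE_mono ht h).not_gt (htE ▸ hx.1)
  · exact (tE_mono ht (Nat.succ_le_of_lt h)).not_gt (htE ▸ hx.2)

/-- The endpoints `tE (α i) < s i 0 < ⋯ < s i (p-1) < tE (α i + 1)` of the subintervals of
`I_{α i}`, continued constantly after index `p + 1`. -/
def subEndpoint (N : ℕ) (t : Fin N → ℝ) {k p : ℕ} (α : Fin k → ℕ) (s : Fin k → Fin p → ℝ)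
    (i : Fin k) : ℕ → EReal
  | 0 => tE N t (α i)
  | n + 1 => if h : n < p then (s i ⟨n, h⟩ : EReal) else tE N t (α i + 1)

theorem subPiece_eq (i : Fin k) (j : Fin (p + 1)) :
    subPiece N t α s i j =
      {x : ℝ | subEndpoint N t α s i j < x ∧ (x : EReal) < subEndpoint N t α s i (j + 1)} := by
  ext x
  obtain ⟨_ | j, hj⟩ := j <;>
  simp only [subPiece, subEndpoint, Set.mem_ofPred_eq] <;> split_ifs <;>
  first | rfl | omega | simp_all

theorem subEndpoint_mono (ht : StrictMono t) (hs_mem : ∀ i j, s i j ∈ openPiece N t (α i))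
    (hs_mono : ∀ i, StrictMono (s i)) (i : Fin k) : Monotone (subEndpoint N t α s i) := by
  refine monotone_nat_of_le_succ fun n => ?_
  rcases n with _ | n <;> simp only [subEndpoint] <;> split_ifs
  all_goals first
    | exact (hs_mem i _).1.le | exact (hs_mem i _).2.le | exact le_rfl
    | exact tE_mono ht (Nat.le_succ _)
    | exact EReal.coe_le_coe_iff.mpr ((hs_mono i).monotone (Fin.mk_le_mk.mpr (Nat.le_succ _)))
    | omega

theorem subEndpoint_succ_of_lt (i : Fin k) {j : ℕ} (hj : j < p) :
    subEndpoint N t α s i (j + 1) = s i ⟨j, hj⟩ :=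
  dif_pos hj

theorem subPiece_subset_openPiece (ht : StrictMono t)
    (hs_mem : ∀ i j, s i j ∈ openPiece N t (α i)) (hs_mono : ∀ i, StrictMono (s i))
    (i : Fin k) (j : Fin (p + 1)) : subPiece N t α s i j ⊆ openPiece N t (α i) := by
  intro x hx
  rw [subPiece_eq] at hx
  have hlast : subEndpoint N t α s i (p + 1) = tE N t (α i + 1) := dif_neg (lt_irrefl p)
  exact ⟨(subEndpoint_mono ht hs_mem hs_mono i (Nat.zero_le j)).trans_lt hx.1,
    hlast ▸ hx.2.trans_le (subEndpoint_mono ht hs_mem hs_mono i (by omega))⟩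

theorem s_notMem_subPiece (ht : StrictMono t) (hs_mem : ∀ i j, s i j ∈ openPiece N t (α i))
    (hs_mono : ∀ i, StrictMono (s i)) (i : Fin k) (j' : Fin p) (j : Fin (p + 1)) :
    s i j' ∉ subPiece N t α s i j := by
  rw [subPiece_eq, Set.mem_ofPred_eq, ← subEndpoint_succ_of_lt i j'.isLt]
  rintro ⟨hlo, hhi⟩
  rcases le_or_gt (j' + 1 : ℕ) j with h | h
  · exact (subEndpoint_mono ht hs_mem hs_mono i h).not_gt hlo
  · exact (subEndpoint_mono ht hs_mem hs_mono i h).not_gt hhi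

theorem exists_mem_subPiece {i : Fin k} {x : ℝ} (hx : x ∈ openPiece N t (α i))
    (hxs : x ∉ Set.range (s i)) : ∃ j, x ∈ subPiece N t α s i j := by
  have hne : ∀ m, (x : EReal) ≠ subEndpoint N t α s i m := by
    rintro (_ | m)
    · exact hx.1.ne'
    · simp only [subEndpoint]
      split_ifs with h
      · exact fun hxs' => hxs ⟨_, (EReal.coe_injective hxs').symm⟩
      · exact hx.2.ne
  obtain ⟨j, hj, hxj⟩ := exists_lt_lt_succ_of_forall_ne (subEndpoint N t α s i) hx.1
    (n := p + 1) (by simpa [subEndpoint] using hx.2) hne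
  exact ⟨⟨j, hj⟩, by rw [subPiece_eq]; exact hxj⟩

theorem ordConnected_subPiece (i : Fin k) (j : Fin (p + 1)) :
    (subPiece N t α s i j).OrdConnected :=
  Set.ordConnected_Ioo.preimage_mono EReal.coe_strictMono.monotone

end Geometry

def refinedJumps {N k p : ℕ} (t : Fin N → ℝ) (s : Fin k → Fin p → ℝ) : Set ℝ :=
  Set.range t ∪ ⋃ i, Set.range (s i)

section RefinedPartition

variable {N : ℕ} {t : Fin N → ℝ} {k p : ℕ} {α : Fin k → ℕ} {s : Fin k → Fin p → ℝ}

theorem refinedJumps_finite : (refinedJumps t s).Finite :=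
  (Set.finite_range t).union (Set.finite_iUnion fun i => Set.finite_range (s i))

theorem range_subset_refinedJumps (i : Fin k) : Set.range (s i) ⊆ refinedJumps t s :=
  fun _ hx => Or.inr (Set.mem_iUnion.mpr ⟨i, hx⟩)

theorem exists_eq_of_mem_refinedJumps (ht : StrictMono t) (hα : Injective α)
    (hs_mem : ∀ i j, s i j ∈ openPiece N t (α i)) {i : Fin k} {x : ℝ}
    (hx : x ∈ openPiece N t (α i)) (hxT : x ∈ refinedJumps t s) : ∃ j, s i j = x := by
  rcases hxT with ⟨m, rfl⟩ | hxs
  · exact absurd hx (t_notMem_openPiece ht m _)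
  obtain ⟨i', j, rfl⟩ := Set.mem_iUnion.mp hxs
  obtain rfl : i = i' := by
    by_contra hne
    exact (pairwise_disjoint_openPiece ht hα hne).notMem_of_mem_left hx (hs_mem i' j)
  exact ⟨j, rfl⟩

theorem disjoint_subPiece_refinedJumps (ht : StrictMono t) (hα : Injective α)
    (hs_mem : ∀ i j, s i j ∈ openPiece N t (α i)) (hs_mono : ∀ i, StrictMono (s i))
    (i : Fin k) (j : Fin (p + 1)) : Disjoint (subPiece N t α s i j) (refinedJumps t s) := by
  refine Set.disjoint_left.mpr fun x hx hxT => ?_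
  obtain ⟨j', rfl⟩ := exists_eq_of_mem_refinedJumps ht hα hs_mem
    (subPiece_subset_openPiece ht hs_mem hs_mono i j hx) hxT
  exact s_notMem_subPiece ht hs_mem hs_mono i j' j hx

theorem eq_of_mem_subPiece_of_pcInseparable (ht : StrictMono t)
    (hs_mem : ∀ i j, s i j ∈ openPiece N t (α i)) (hs_mono : ∀ i, StrictMono (s i))
    {i : Fin k} {j j' : Fin (p + 1)} {x y : ℝ} (hx : x ∈ subPiece N t α s i j)
    (hy : y ∈ subPiece N t α s i j') (hxy : PcInseparable (refinedJumps t s) x y) : j = j' := by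
  by_contra hne
  wlog hlt : j < j' generalizing j j' x y
  · exact this hy hx (fun h hh => (hxy h hh).symm) (Ne.symm hne)
      ((Ne.symm hne).lt_or_gt.resolve_right hlt)
  rw [Fin.lt_def] at hlt
  have hjp : (j : ℕ) < p := by omega
  rw [subPiece_eq, Set.mem_ofPred_eq] at hx hy
  have hsj := subEndpoint_succ_of_lt (N := N) (t := t) (α := α) (s := s) i hjp
  refine not_pcInseparable_of_lt_of_lt
    (range_subset_refinedJumps i (Set.mem_range_self ⟨j, hjp⟩)) ?_ ?_ hxy
  · exact EReal.coe_lt_coe_iff.mp (hsj ▸ hx.2)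
  · exact EReal.coe_lt_coe_iff.mp (hsj ▸ (subEndpoint_mono ht hs_mem hs_mono i hlt).trans_lt hy.1)

theorem exists_subset_openPiece_of_mem_cyclePieces (ht : StrictMono t)
    (hs_mem : ∀ i j, s i j ∈ openPiece N t (α i)) (hs_mono : ∀ i, StrictMono (s i))
    {P : Set ℝ} (hP : P ∈ cyclePieces N t α s) : ∃ i, P ⊆ openPiece N t (α i) := by
  rcases hP with ⟨i, j, rfl⟩ | ⟨i, j, rfl⟩
  · exact ⟨i, subPiece_subset_openPiece ht hs_mem hs_mono i j⟩
  · exact ⟨i, Set.singleton_subset_iff.mpr (hs_mem i j)⟩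

end RefinedPartition

section Return

variable {N : ℕ} {t : Fin N → ℝ} {σ : Equiv.Perm ℝ} {k p : ℕ} {α : Fin k → ℕ}
  {s : Fin k → Fin p → ℝ}

theorem dvd_of_mem_cyclePieces (ht : StrictMono t) (hα : Injective α)
    (hs_mem : ∀ i j, s i j ∈ openPiece N t (α i)) (hs_mono : ∀ i, StrictMono (s i))
    (hcyc : PermutesCyclically σ fun i => openPiece N t (α i))
    {P : Set ℝ} (hP : P ∈ cyclePieces N t α s) {x : ℝ} {m : ℕ} (hx : x ∈ P)
    (hm : (σ ^ m) x ∈ P) : k ∣ m := by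
  obtain ⟨i, hPi⟩ := exists_subset_openPiece_of_mem_cyclePieces ht hs_mem hs_mono hP
  exact hcyc.dvd_of_mem_of_pow_apply_mem (pairwise_disjoint_openPiece ht hα) (hPi hx) (hPi hm)

theorem exists_pow_mul_apply_eq_self (ht : StrictMono t) (hα : Injective α)
    (hs_mem : ∀ i j, s i j ∈ openPiece N t (α i))
    (hcyc : PermutesCyclically σ fun i => openPiece N t (α i))
    (hσ : AlgInvariant (pcAlgOn (refinedJumps t s)) σ)
    (hσsymm : AlgInvariant (pcAlgOn (refinedJumps t s)) σ.symm)
    {i : Fin k} {x : ℝ} (hx : x ∈ openPiece N t (α i)) (hxT : x ∈ refinedJumps t s) :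
    ∃ l, 0 < l ∧ l ≤ p ∧ (σ ^ (k * l)) x = x := by
  have hret : ∀ m, ∃ j, s i j = ((σ ^ k) ^ m) x := by
    intro m
    rw [← pow_mul]
    exact exists_eq_of_mem_refinedJumps ht hα hs_mem (hcyc.pow_mul_apply_mem hx m)
      ((apply_mem_iff_of_pcInseparable refinedJumps_finite
        fun _ _ => pcInseparable_pow_apply_iff hσ hσsymm _).mpr hxT)
  choose c hc using hret
  obtain ⟨l, hl, hlp, hxl⟩ := exists_pos_le_rel_pow_apply
    (fun _ _ => (pcInseparable_pow_apply_iff hσ hσsymm k).mp) c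
    (fun u v huv _ _ => by rw [← hc u, ← hc v, huv])
  exact ⟨l, hl, hlp, by rw [pow_mul]; exact eq_of_pcInseparable hxT hxl⟩

theorem exists_pow_mul_apply_mem_subPiece (ht : StrictMono t) (hα : Injective α)
    (hs_mem : ∀ i j, s i j ∈ openPiece N t (α i)) (hs_mono : ∀ i, StrictMono (s i))
    (hcyc : PermutesCyclically σ fun i => openPiece N t (α i))
    (hσ : AlgInvariant (pcAlgOn (refinedJumps t s)) σ)
    (hσsymm : AlgInvariant (pcAlgOn (refinedJumps t s)) σ.symm)
    {i : Fin k} {j : Fin (p + 1)} {x : ℝ} (hx : x ∈ subPiece N t α s i j) :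
    ∃ l, 0 < l ∧ l ≤ p + 1 ∧ (σ ^ (k * l)) x ∈ subPiece N t α s i j := by
  have hxT := (disjoint_subPiece_refinedJumps ht hα hs_mem hs_mono i j).notMem_of_mem_left hx
  have hret : ∀ m, ∃ j', ((σ ^ k) ^ m) x ∈ subPiece N t α s i j' := by
    intro m
    rw [← pow_mul]
    refine exists_mem_subPiece
      (hcyc.pow_mul_apply_mem (subPiece_subset_openPiece ht hs_mem hs_mono i j hx) m)
      fun hs => hxT ?_
    exact (apply_mem_iff_of_pcInseparable refinedJumps_finite
      fun _ _ => pcInseparable_pow_apply_iff hσ hσsymm _).mp (range_subset_refinedJumps i hs)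
  choose c hc using hret
  obtain ⟨l, hl, hlp, hxl⟩ := exists_pos_le_rel_pow_apply
    (fun _ _ => (pcInseparable_pow_apply_iff hσ hσsymm k).mp) c
    (fun u v huv => pcInseparable_of_ordConnected (ordConnected_subPiece i (c u))
      (disjoint_subPiece_refinedJumps ht hα hs_mem hs_mono i (c u)) (hc u) (huv ▸ hc v))
  obtain rfl := eq_of_mem_subPiece_of_pcInseparable ht hs_mem hs_mono hx (hc l) hxl
  exact ⟨l, hl, hlp, by rw [pow_mul]; exact hc l⟩

theorem exists_pow_mul_apply_mem_cyclePieces (ht : StrictMono t) (hα : Injective α)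
    (hs_mem : ∀ i j, s i j ∈ openPiece N t (α i)) (hs_mono : ∀ i, StrictMono (s i))
    (hcyc : PermutesCyclically σ fun i => openPiece N t (α i))
    (hσ : AlgInvariant (pcAlgOn (refinedJumps t s)) σ)
    (hσsymm : AlgInvariant (pcAlgOn (refinedJumps t s)) σ.symm)
    {i : Fin k} {x : ℝ} (hx : x ∈ openPiece N t (α i)) :
    ∃ l, 0 < l ∧ l ≤ p + 1 ∧ ∃ P ∈ cyclePieces N t α s, x ∈ P ∧ (σ ^ (k * l)) x ∈ P := by
  by_cases hxT : x ∈ refinedJumps t s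
  · obtain ⟨l, hl, hlp, hxl⟩ := exists_pow_mul_apply_eq_self ht hα hs_mem hcyc hσ hσsymm hx hxT
    obtain ⟨j, rfl⟩ := exists_eq_of_mem_refinedJumps ht hα hs_mem hx hxT
    exact ⟨l, hl, hlp.trans p.le_succ, {s i j}, Or.inr ⟨i, j, rfl⟩, rfl, hxl⟩
  · obtain ⟨j, hj⟩ := exists_mem_subPiece hx fun hs => hxT (range_subset_refinedJumps i hs)
    obtain ⟨l, hl, hlp, hxl⟩ :=
      exists_pow_mul_apply_mem_subPiece ht hα hs_mem hs_mono hcyc hσ hσsymm hj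
    exact ⟨l, hl, hlp, _, Or.inl ⟨i, j, rfl⟩, hj, hxl⟩

end Return

/-- in the cyclic setup, if `C_k` consists of the intervals
`I_{α 0}, …, I_{α (k-1)}`, then `C_k = ⋃_{l=1}^{p+1} C̃_{k·l}`. -/
theorem statement9 (N : ℕ) (t : Fin N → ℝ) (ht : StrictMono t)
    (σ : Equiv.Perm ℝ) (k p : ℕ) (α : Fin k → ℕ) (s : Fin k → Fin p → ℝ)
    (hsetup : CyclicSetup N t σ α s)
    (hCeq : Ck N t σ k = ⋃ i, openPiece N t (α i)) :
    Ck N t σ k = ⋃ (l : ℕ) (_ : 1 ≤ l ∧ l ≤ p + 1), Ctil N t σ α s (k * l) := by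
  obtain ⟨hk, -, hα, hs_mem, hs_mono, hcyc, -, -, -, hσ, hσsymm⟩ := hsetup
  rw [hCeq]
  refine Set.Subset.antisymm (fun x hx => ?_) (Set.iUnion₂_subset fun _ _ _ hx => hx.1)
  obtain ⟨i, hxi⟩ := Set.mem_iUnion.mp hx
  obtain ⟨l, hl, hlp, hret⟩ :=
    exists_pow_mul_apply_mem_cyclePieces ht hα hs_mem hs_mono hcyc hσ hσsymm hxi
  obtain ⟨l', hl', hl'l, hleast⟩ := exists_isLeast_mul_of_forall_dvd
    (S := {m | 0 < m ∧ ∃ P ∈ cyclePieces N t α s, x ∈ P ∧ (σ ^ m) x ∈ P})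
    (fun m ⟨hm, P, hP, hxP, hmP⟩ =>
      ⟨hm, dvd_of_mem_cyclePieces ht hα hs_mem hs_mono hcyc hP hxP hmP⟩)
    ⟨Nat.mul_pos hk hl, hret⟩
  exact Set.mem_iUnion₂.mpr ⟨l', ⟨hl', hl'l.trans hlp⟩, hx, hleast⟩

end PaperTRS
end
end

section
/- Let X, 𝒫, 𝒜, σ be as in the context, and suppose exactly one partition set X₀ is refined into a finite disjoint union X₀ = ⋃_{j=1}^{s} X_{0j} of nonempty subsets, with 𝒜_S the algebra of functions constant on the sets of the refined partition, and both 𝒜 and 𝒜_S invariant under σ and σ⁻¹ (so σ(X₀) = X₀). For a positive integer k let C̃_k := {x ∈ X₀ : k is the smallest positive integer such that x and σᵏ(x) lie in one common X_{0j}}. Then for every n ∈ ℤ, Sepⁿ_{𝒜_S}(X) = Sepⁿ_𝒜(X) ∪ (⋃_{k ∤ n} C̃_k), and the commutants in 𝒜_S⋊_σ̃ℤ satisfy 𝒜_S′ = 𝒜′ \ {Σ_{n} fₙδⁿ ∈ 𝒜′ : fₙ does not vanish identically on C̃_k for some n and some positive integer k with k ∤ n}. -/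
open scoped Classical

noncomputable section

/-!
Functions constant on the pieces of a partition separate `x` from `σ⁻ⁿ x` exactly when the two
points lie in different pieces, and invariance of the algebra under `σ` and `σ⁻¹` makes the times
at which `x` returns to its own piece an additive subgroup of `ℤ`. Off `X₀` the two partitions
agree. If `x ∈ X₀` returns to `X₀` at some time `m ≠ 0`, then every `σ^(jm) x` lies in `X₀`, and
the pigeonhole principle over the finitely many `X₀ⱼ` makes the refined return group nonzero,
hence equal to `kℤ` for the least positive refined return time `k`, i.e. `x ∈ C̃_k`; so `𝒜_S`
separates `x` from `σ⁻ⁿ x` iff `k ∤ n`. The commutant identity follows because an element lies in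
a commutant iff each `fₙ` vanishes on the corresponding `Sepⁿ`.
-/

namespace PaperTRS

open Set Function

section SamePiece

variable {X ι : Type*} {R : ι → Set X}

def SamePiece (R : ι → Set X) (x y : X) : Prop := ∃ i, x ∈ R i ∧ y ∈ R i

theorem SamePiece.refl (hcov : ⋃ i, R i = univ) (x : X) : SamePiece R x x := by
  obtain ⟨i, hi⟩ := mem_iUnion.1 (hcov.symm ▸ mem_univ x)
  exact ⟨i, hi, hi⟩

theorem SamePiece.symm {x y : X} (h : SamePiece R x y) : SamePiece R y x :=
  let ⟨i, hx, hy⟩ := h; ⟨i, hy, hx⟩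

theorem SamePiece.trans (hd : Pairwise (Disjoint on R)) {x y z : X} (hxy : SamePiece R x y)
    (hyz : SamePiece R y z) : SamePiece R x z := by
  obtain ⟨i, hx, hy⟩ := hxy
  obtain ⟨j, hy', hz⟩ := hyz
  obtain rfl : i = j := hd.eq (not_disjoint_iff.2 ⟨y, hy, hy'⟩)
  exact ⟨i, hx, hz⟩

theorem indicator_one_mem_partAlg (hd : Pairwise (Disjoint on R)) (i : ι) :
    (R i).indicator 1 ∈ partAlg R := by
  intro j x hx y hy
  obtain rfl | hji := eq_or_ne j i
  · simp [hx, hy]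
  · simp [(hd hji).notMem_of_mem_left hx, (hd hji).notMem_of_mem_left hy]

theorem mem_sep_partAlg_iff (hd : Pairwise (Disjoint on R)) (hcov : ⋃ i, R i = univ)
    (σ : Equiv.Perm X) (n : ℤ) (x : X) :
    x ∈ Sep (partAlg R) σ n ↔ ¬SamePiece R x ((σ ^ n)⁻¹ x) := by
  constructor
  · rintro ⟨h, hh, hne⟩ ⟨i, hx, hy⟩
    exact hne (hh i x hx _ hy)
  · intro hns
    obtain ⟨i, hx, -⟩ := SamePiece.refl hcov x
    refine ⟨_, indicator_one_mem_partAlg hd i, ?_⟩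
    have hy : (σ ^ n)⁻¹ x ∉ R i := fun hy => hns ⟨i, hx, hy⟩
    rw [indicator_of_mem hx, indicator_of_notMem hy]
    exact one_ne_zero

theorem AlgInvariant.comp {A : Subalgebra ℂ (X → ℂ)} {f g : X → X} (hf : AlgInvariant A f)
    (hg : AlgInvariant A g) : AlgInvariant A (f ∘ g) :=
  fun h hh => hg _ (hf h hh)

theorem AlgInvariant.zpow {A : Subalgebra ℂ (X → ℂ)} {σ : Equiv.Perm X}
    (h : AlgInvariant A σ) (h' : AlgInvariant A σ.symm) (m : ℤ) :
    AlgInvariant A ⇑(σ ^ m) := by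
  induction m using Int.induction_on with
  | zero => exact fun h hh => hh
  | succ k ih => rw [zpow_add_one, Equiv.Perm.coe_mul]; exact ih.comp h
  | pred k ih => rw [zpow_sub_one, Equiv.Perm.coe_mul]; exact ih.comp h'

theorem SamePiece.map (hd : Pairwise (Disjoint on R)) (hcov : ⋃ i, R i = univ) {f : X → X}
    (hf : AlgInvariant (partAlg R) f) {x y : X} (hxy : SamePiece R x y) :
    SamePiece R (f x) (f y) := by
  obtain ⟨i, hx, hy⟩ := hxy
  obtain ⟨j, hfx, -⟩ := SamePiece.refl hcov (f x)
  refine ⟨j, hfx, by_contra fun hfy => ?_⟩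
  have := hf _ (indicator_one_mem_partAlg hd j) i x hx y hy
  rw [comp_apply, comp_apply, indicator_of_mem hfx, indicator_of_notMem hfy] at this
  exact one_ne_zero this

def returnTimes (hd : Pairwise (Disjoint on R)) (hcov : ⋃ i, R i = univ) {σ : Equiv.Perm X}
    (h : AlgInvariant (partAlg R) σ) (h' : AlgInvariant (partAlg R) σ.symm) (x : X) :
    AddSubgroup ℤ where
  carrier := {m | SamePiece R x ((σ ^ m) x)}
  zero_mem' := SamePiece.refl hcov x
  add_mem' {a b} ha hb := by
    have := hb.map hd hcov (h.zpow h' a)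
    rw [← Equiv.Perm.mul_apply, ← zpow_add] at this
    exact ha.trans hd this
  neg_mem' {a} ha := by
    have := ha.map hd hcov (h.zpow h' (-a))
    rw [← Equiv.Perm.mul_apply, ← zpow_add, neg_add_cancel, zpow_zero] at this
    exact this.symm

variable {hd : Pairwise (Disjoint on R)} {hcov : ⋃ i, R i = univ} {σ : Equiv.Perm X}
  {h : AlgInvariant (partAlg R) σ} {h' : AlgInvariant (partAlg R) σ.symm}

theorem mem_returnTimes {x : X} {m : ℤ} :
    m ∈ returnTimes hd hcov h h' x ↔ SamePiece R x ((σ ^ m) x) := Iff.rfl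

theorem sub_mem_returnTimes {x : X} {a b : ℤ} (hab : SamePiece R ((σ ^ a) x) ((σ ^ b) x)) :
    b - a ∈ returnTimes hd hcov h h' x := by
  have := hab.map hd hcov (h.zpow h' (-a))
  rwa [← Equiv.Perm.mul_apply, ← Equiv.Perm.mul_apply, ← zpow_add, ← zpow_add, neg_add_cancel,
    zpow_zero, neg_add_eq_sub] at this

end SamePiece

section IntSubgroup

theorem _root_.Int.mem_addSubgroup_iff_dvd_of_isLeast {T : AddSubgroup ℤ} {k : ℕ}
    (hk : IsLeast {j : ℕ | 0 < j ∧ (j : ℤ) ∈ T} k) (n : ℤ) : n ∈ T ↔ (k : ℤ) ∣ n := by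
  have hk' : IsLeast {g : ℤ | g ∈ T ∧ 0 < g} k := by
    refine ⟨⟨hk.1.2, by exact_mod_cast hk.1.1⟩, fun g ⟨hg, hpos⟩ => ?_⟩
    lift g to ℕ using hpos.le
    exact_mod_cast hk.2 ⟨by exact_mod_cast hpos, hg⟩
  rw [AddSubgroup.cyclic_of_min hk', ← AddSubgroup.zmultiples_eq_closure, Int.mem_zmultiples_iff]

theorem _root_.Int.notMem_addSubgroup_iff {T : AddSubgroup ℤ} (hT : T ≠ ⊥) (n : ℤ) :
    n ∉ T ↔ ∃ k : ℕ, 0 < k ∧ ¬(k : ℤ) ∣ n ∧ IsLeast {j : ℕ | 0 < j ∧ (j : ℤ) ∈ T} k := by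
  classical
  have hpos : ∃ j : ℕ, 0 < j ∧ (j : ℤ) ∈ T := by
    obtain ⟨m, hm, hm0⟩ := (T.bot_or_exists_ne_zero).resolve_left hT
    exact ⟨m.natAbs, Int.natAbs_pos.2 hm0, by rwa [Int.natCast_natAbs, abs_mem_iff]⟩
  have hleast : IsLeast {j : ℕ | 0 < j ∧ (j : ℤ) ∈ T} (Nat.find hpos) :=
    ⟨Nat.find_spec hpos, fun j hj => Nat.find_min' hpos hj⟩
  constructor
  · intro hn
    exact ⟨_, hleast.1.1, fun hdvd => hn ((Int.mem_addSubgroup_iff_dvd_of_isLeast hleast n).2 hdvd),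
      hleast⟩
  · rintro ⟨k, -, hkn, hk⟩ hn
    exact hkn ((Int.mem_addSubgroup_iff_dvd_of_isLeast hk n).1 hn)

end IntSubgroup

section Refinement

variable {X J ι : Type*} {P : J → Set X} {i₀ : J} {Q : ι → Set X} {σ : Equiv.Perm X}

def refinement (P : J → Set X) (i₀ : J) (Q : ι → Set X) : {i // i ≠ i₀} ⊕ ι → Set X :=
  Sum.elim (fun i => P i.1) Q

theorem pairwise_disjoint_refinement (hP : Pairwise (Disjoint on P))
    (hQ : Pairwise (Disjoint on Q)) (hQP : ∀ r, Q r ⊆ P i₀) :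
    Pairwise (Disjoint on refinement P i₀ Q) := by
  rintro (⟨i, hi⟩ | r) (⟨j, hj⟩ | r') hne
  · exact hP fun hij => hne (by subst hij; rfl)
  · exact (hP hi).mono_right (hQP r')
  · exact ((hP hj).mono_right (hQP r)).symm
  · exact hQ fun hrr => hne (congrArg Sum.inr hrr)

theorem iUnion_refinement (hcov : ⋃ i, P i = univ) (hQcov : ⋃ r, Q r = P i₀) :
    ⋃ a, refinement P i₀ Q a = univ := by
  refine eq_univ_of_forall fun x => ?_
  obtain ⟨i, hi⟩ := mem_iUnion.1 (hcov.symm ▸ mem_univ x)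
  obtain rfl | hne := eq_or_ne i i₀
  · obtain ⟨r, hr⟩ := mem_iUnion.1 (hQcov.symm ▸ hi)
    exact mem_iUnion.2 ⟨Sum.inr r, hr⟩
  · exact mem_iUnion.2 ⟨Sum.inl ⟨i, hne⟩, hi⟩

theorem SamePiece.of_refinement (hQP : ∀ r, Q r ⊆ P i₀) {x y : X}
    (h : SamePiece (refinement P i₀ Q) x y) : SamePiece P x y := by
  obtain ⟨⟨i, _⟩ | r, hx, hy⟩ := h
  · exact ⟨i, hx, hy⟩
  · exact ⟨i₀, hQP r hx, hQP r hy⟩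

theorem samePiece_refinement_iff_of_notMem (hQP : ∀ r, Q r ⊆ P i₀) {x : X} (hx : x ∉ P i₀)
    (y : X) : SamePiece (refinement P i₀ Q) x y ↔ SamePiece P x y := by
  refine ⟨SamePiece.of_refinement hQP, fun ⟨i, hxi, hyi⟩ => ?_⟩
  exact ⟨Sum.inl ⟨i, by rintro rfl; exact hx hxi⟩, hxi, hyi⟩

theorem samePiece_refinement_iff_of_mem (hP : Pairwise (Disjoint on P)) {x : X} (hx : x ∈ P i₀)
    (y : X) : SamePiece (refinement P i₀ Q) x y ↔ ∃ r, x ∈ Q r ∧ y ∈ Q r := by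
  refine ⟨?_, fun ⟨r, hr⟩ => ⟨Sum.inr r, hr⟩⟩
  rintro ⟨⟨i, hi⟩ | r, hxi, hy⟩
  · exact absurd (hP hi) (not_disjoint_iff.2 ⟨x, hxi, hx⟩)
  · exact ⟨r, hxi, hy⟩

theorem mem_ctilGen_iff (hdP : Pairwise (Disjoint on P)) {x : X} (hx : x ∈ P i₀) (k : ℕ) :
    x ∈ CtilGen σ Q (P i₀) k ↔
      IsLeast {j : ℕ | 0 < j ∧ SamePiece (refinement P i₀ Q) x ((σ ^ (j : ℤ)) x)} k := by
  simp only [CtilGen, mem_ofPred_eq, hx, true_and, zpow_natCast,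
    samePiece_refinement_iff_of_mem hdP hx]

/-- Pigeonhole: the points `σ ^ (j * m) x`, `j ∈ ℕ`, all lie in `P i₀`, which has only finitely
many refined pieces. -/
theorem returnTimes_refinement_ne_bot [Finite ι] {hdP : Pairwise (Disjoint on P)}
    {hcovP : ⋃ i, P i = univ} {hP : AlgInvariant (partAlg P) σ}
    {hP' : AlgInvariant (partAlg P) σ.symm} (hdR : Pairwise (Disjoint on refinement P i₀ Q))
    (hcovR : ⋃ a, refinement P i₀ Q a = univ) (hR : AlgInvariant (partAlg (refinement P i₀ Q)) σ)
    (hR' : AlgInvariant (partAlg (refinement P i₀ Q)) σ.symm) (hQcov : ⋃ r, Q r = P i₀) {x : X}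
    (hx : x ∈ P i₀) {m : ℤ} (hm : m ∈ returnTimes hdP hcovP hP hP' x) (hm0 : m ≠ 0) :
    returnTimes hdR hcovR hR hR' x ≠ ⊥ := by
  have hiter (j : ℕ) : (σ ^ ((j : ℤ) * m)) x ∈ P i₀ := by
    obtain ⟨i, hxi, hyi⟩ := (returnTimes hdP hcovP hP hP' x).zsmul_mem hm j
    obtain rfl : i = i₀ := hdP.eq (not_disjoint_iff.2 ⟨x, hxi, hx⟩)
    exact hyi
  choose r hr using fun j : ℕ => mem_iUnion.1 (hQcov.symm ▸ hiter j)
  obtain ⟨a, b, hab, hrab⟩ := Finite.exists_ne_map_eq_of_infinite r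
  have hmem := sub_mem_returnTimes (hd := hdR) (hcov := hcovR) (h := hR) (h' := hR')
    (⟨Sum.inr (r a), hr a, hrab ▸ hr b⟩ : SamePiece (refinement P i₀ Q) _ _)
  intro hbot
  rw [hbot, AddSubgroup.mem_bot, ← sub_mul, mul_eq_zero, sub_eq_zero] at hmem
  exact hab (by exact_mod_cast (hmem.resolve_right hm0).symm)

theorem not_samePiece_refinement_iff [Finite ι] (hdP : Pairwise (Disjoint on P))
    (hcovP : ⋃ i, P i = univ) (hQ : Pairwise (Disjoint on Q)) (hQcov : ⋃ r, Q r = P i₀)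
    (hP : AlgInvariant (partAlg P) σ) (hP' : AlgInvariant (partAlg P) σ.symm)
    (hR : AlgInvariant (partAlg (refinement P i₀ Q)) σ)
    (hR' : AlgInvariant (partAlg (refinement P i₀ Q)) σ.symm) {x : X} (hx : x ∈ P i₀) {m : ℤ}
    (hm0 : m ≠ 0) (hm : SamePiece P x ((σ ^ m) x)) :
    ¬SamePiece (refinement P i₀ Q) x ((σ ^ m) x) ↔
      ∃ k : ℕ, 0 < k ∧ ¬(k : ℤ) ∣ m ∧ x ∈ CtilGen σ Q (P i₀) k := by
  have hdR := pairwise_disjoint_refinement hdP hQ fun r => hQcov ▸ subset_iUnion Q r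
  have hcovR := iUnion_refinement hcovP hQcov
  have hne := returnTimes_refinement_ne_bot hdR hcovR hR hR' hQcov hx
    (show m ∈ returnTimes hdP hcovP hP hP' x from hm) hm0
  rw [← mem_returnTimes (hd := hdR) (hcov := hcovR) (h := hR) (h' := hR'),
    Int.notMem_addSubgroup_iff hne]
  simp only [mem_returnTimes, mem_ctilGen_iff hdP hx]

theorem mem_sep_refinement_iff [Finite ι] (hdP : Pairwise (Disjoint on P))
    (hcovP : ⋃ i, P i = univ) (hQ : Pairwise (Disjoint on Q)) (hQcov : ⋃ r, Q r = P i₀)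
    (hP : AlgInvariant (partAlg P) σ) (hP' : AlgInvariant (partAlg P) σ.symm)
    (hR : AlgInvariant (partAlg (refinement P i₀ Q)) σ)
    (hR' : AlgInvariant (partAlg (refinement P i₀ Q)) σ.symm) (n : ℤ) (x : X) :
    x ∈ Sep (partAlg (refinement P i₀ Q)) σ n ↔
      x ∈ Sep (partAlg P) σ n ∨ ∃ k : ℕ, (0 < k ∧ ¬(k : ℤ) ∣ n) ∧ x ∈ CtilGen σ Q (P i₀) k := by
  have hQP (r : ι) : Q r ⊆ P i₀ := hQcov ▸ subset_iUnion Q r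
  have hdR := pairwise_disjoint_refinement hdP hQ hQP
  have hcovR := iUnion_refinement hcovP hQcov
  rw [mem_sep_partAlg_iff hdR hcovR, mem_sep_partAlg_iff hdP hcovP, ← zpow_neg]
  by_cases hx : x ∈ P i₀
  swap
  · have hC (k : ℕ) : x ∉ CtilGen σ Q (P i₀) k := fun hk => hx hk.1
    simp [samePiece_refinement_iff_of_notMem hQP hx, hC]
  by_cases hxy : SamePiece P x ((σ ^ (-n)) x)
  swap
  · simp only [hxy, not_false_eq_true, true_or, iff_true]
    exact fun h => hxy (SamePiece.of_refinement hQP h)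
  obtain rfl | hn := eq_or_ne n 0
  · simp [SamePiece.refl hcovR, SamePiece.refl hcovP]
  · rw [not_samePiece_refinement_iff hdP hcovP hQ hQcov hP hP' hR hR' hx (neg_ne_zero.2 hn) hxy]
    simp only [hxy, not_true_eq_false, false_or, dvd_neg, and_assoc]

theorem sep_refinement [Finite ι] (hdP : Pairwise (Disjoint on P)) (hcovP : ⋃ i, P i = univ)
    (hQ : Pairwise (Disjoint on Q)) (hQcov : ⋃ r, Q r = P i₀)
    (hP : AlgInvariant (partAlg P) σ) (hP' : AlgInvariant (partAlg P) σ.symm)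
    (hR : AlgInvariant (partAlg (refinement P i₀ Q)) σ)
    (hR' : AlgInvariant (partAlg (refinement P i₀ Q)) σ.symm) (n : ℤ) :
    Sep (partAlg (refinement P i₀ Q)) σ n =
      Sep (partAlg P) σ n ∪ ⋃ (k : ℕ) (_ : 0 < k ∧ ¬(k : ℤ) ∣ n), CtilGen σ Q (P i₀) k := by
  ext x
  simp only [mem_union, mem_iUnion, exists_prop]
  exact mem_sep_refinement_iff hdP hcovP hQ hQcov hP hP' hR hR' n x

end Refinement

section Commutant

variable {X : Type*}

theorem _root_.Finsupp.sum_single_apply_of_map_zero {α M N : Type*} [Zero M] [AddCommMonoid N]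
    (f : α →₀ M) {g : α → M → N} (hg : ∀ a, g a 0 = 0) (a : α) :
    (f.sum fun b m => Finsupp.single b (g b m)) a = g a (f a) := by
  classical
  simp only [Finsupp.sum_apply, Finsupp.single_apply, Finsupp.sum_ite_eq']
  split_ifs with h
  · rfl
  · rw [Finsupp.notMem_support_iff.1 h, hg]

theorem cmul_single_zero_right_apply (σ : Equiv.Perm X) (f : ℤ →₀ (X → ℂ)) (a : X → ℂ)
    (n : ℤ) : cmul σ f (Finsupp.single 0 a) n = fun x => f n x * a ((σ ^ n)⁻¹ x) := by
  have : cmul σ f (Finsupp.single 0 a) =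
      f.sum fun m b => Finsupp.single m fun x => b x * a ((σ ^ m)⁻¹ x) := by
    refine Finsupp.sum_congr fun m _ => ?_
    rw [Finsupp.sum_single_index] <;> simp [← Pi.zero_def]
  rw [this, Finsupp.sum_single_apply_of_map_zero _ fun m => funext fun x => zero_mul _]

theorem cmul_single_zero_left_apply (σ : Equiv.Perm X) (f : ℤ →₀ (X → ℂ)) (a : X → ℂ)
    (n : ℤ) : cmul σ (Finsupp.single 0 a) f n = fun x => a x * f n x := by
  have : cmul σ (Finsupp.single 0 a) f =
      f.sum fun m b => Finsupp.single m fun x => a x * b x := by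
    rw [cmul, Finsupp.sum_single_index] <;> simp [← Pi.zero_def]
  rw [this, Finsupp.sum_single_apply_of_map_zero _ fun m => funext fun x => mul_zero _]

/-- Commuting with `a δ⁰` means `fₙ(x) a(σ⁻ⁿ x) = a(x) fₙ(x)` for all `n` and `x`. -/
theorem mem_commutant_iff {A B : Subalgebra ℂ (X → ℂ)} {σ : Equiv.Perm X}
    {f : ℤ →₀ (X → ℂ)} :
    f ∈ commutant A B σ ↔ InCrossed B f ∧ ∀ n, ∀ x ∈ Sep A σ n, f n x = 0 := by
  have hcomm (a : X → ℂ) : cmul σ f (Finsupp.single 0 a) = cmul σ (Finsupp.single 0 a) f ↔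
      ∀ n x, f n x * a ((σ ^ n)⁻¹ x) = a x * f n x := by
    simp only [Finsupp.ext_iff, funext_iff, cmul_single_zero_right_apply,
      cmul_single_zero_left_apply]
  refine and_congr_right fun _ => ⟨fun hf n x ⟨a, ha, hne⟩ => ?_, fun hf a ha => ?_⟩
  · by_contra hfx
    have := (hcomm a).1 (hf a ha) n x
    exact hne (mul_left_cancel₀ hfx (by rw [this, mul_comm]))
  · refine (hcomm a).2 fun n x => ?_
    by_cases hx : x ∈ Sep A σ n
    · simp [hf n x hx]
    · rw [show a ((σ ^ n)⁻¹ x) = a x from not_not.1 fun hne => hx ⟨a, ha, Ne.symm hne⟩,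
        mul_comm]

theorem commutant_eq_diff_of_sep_eq_union {A A' B : Subalgebra ℂ (X → ℂ)} {σ : Equiv.Perm X}
    {S : ℤ → Set X} (hS : ∀ n, Sep A' σ n = Sep A σ n ∪ S n) :
    commutant A' B σ = commutant A B σ \ {f | ∃ n, ∃ x ∈ S n, f n x ≠ 0} := by
  ext f
  simp only [mem_sdiff, mem_commutant_iff, hS, mem_union, or_imp, forall_and, mem_ofPred_eq,
    not_exists, not_and, not_not]
  tauto

end Commutant

theorem statement14_general {X J : Type*} (P : J → Set X)
    (hdisj : ∀ i j, i ≠ j → Disjoint (P i) (P j))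
    (hcover : ⋃ i, P i = Set.univ)
    (i₀ : J) (s : ℕ) (Q : Fin s → Set X)
    (hQdisj : ∀ r r' : Fin s, r ≠ r' → Disjoint (Q r) (Q r'))
    (hQcover : ⋃ r, Q r = P i₀)
    (σ : Equiv.Perm X)
    (h1 : AlgInvariant (partAlg P) σ)
    (h2 : AlgInvariant (partAlg P) σ.symm)
    (h3 : AlgInvariant
      (partAlg (Sum.elim (fun i : {i : J // i ≠ i₀} => P i.1) Q)) σ)
    (h4 : AlgInvariant
      (partAlg (Sum.elim (fun i : {i : J // i ≠ i₀} => P i.1) Q)) σ.symm) :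
    (∀ n : ℤ,
      Sep (partAlg (Sum.elim (fun i : {i : J // i ≠ i₀} => P i.1) Q)) σ n =
        Sep (partAlg P) σ n ∪
          ⋃ (k : ℕ) (_ : 0 < k ∧ ¬((k : ℤ) ∣ n)), CtilGen σ Q (P i₀) k) ∧
    commutant (partAlg (Sum.elim (fun i : {i : J // i ≠ i₀} => P i.1) Q))
        (partAlg (Sum.elim (fun i : {i : J // i ≠ i₀} => P i.1) Q)) σ =
      commutant (partAlg P)
          (partAlg (Sum.elim (fun i : {i : J // i ≠ i₀} => P i.1) Q)) σ \
        {f : ℤ →₀ (X → ℂ) | ∃ n : ℤ, ∃ k : ℕ, 0 < k ∧ ¬((k : ℤ) ∣ n) ∧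
          ¬(∀ x ∈ CtilGen σ Q (P i₀) k, f n x = 0)} := by
  have hsep := sep_refinement hdisj hcover hQdisj hQcover h1 h2 h3 h4
  refine ⟨hsep, (commutant_eq_diff_of_sep_eq_union hsep).trans ?_⟩
  congr 1
  ext f
  simp only [mem_iUnion, exists_prop, mem_ofPred_eq, not_forall]
  tauto

/-- refining exactly one partition set `X₀ = P i₀` into `s` nonempty disjoint
subsets `Q r` (with `𝒜` and `𝒜_S` invariant under `σ` and `σ⁻¹`, so `σ(X₀) = X₀`),
`Sepⁿ_{𝒜_S}(X) = Sepⁿ_𝒜(X) ∪ ⋃_{k ∤ n} C̃_k` for every `n`, and the commutants in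
`𝒜_S ⋊_σ̃ ℤ` satisfy `𝒜_S' = 𝒜' \ {Σ fₙδⁿ : fₙ ≢ 0 on C̃_k for some n, k with k ∤ n}`. -/
theorem statement14 {X J : Type*} [Countable J] (P : J → Set X)
    (hne : ∀ i, (P i).Nonempty)
    (hdisj : ∀ i j, i ≠ j → Disjoint (P i) (P j))
    (hcover : ⋃ i, P i = Set.univ)
    (i₀ : J) (s : ℕ) (Q : Fin s → Set X)
    (hQne : ∀ r, (Q r).Nonempty)
    (hQdisj : ∀ r r' : Fin s, r ≠ r' → Disjoint (Q r) (Q r'))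
    (hQcover : ⋃ r, Q r = P i₀)
    (σ : Equiv.Perm X)
    (h1 : AlgInvariant (partAlg P) σ)
    (h2 : AlgInvariant (partAlg P) σ.symm)
    (h3 : AlgInvariant
      (partAlg (Sum.elim (fun i : {i : J // i ≠ i₀} => P i.1) Q)) σ)
    (h4 : AlgInvariant
      (partAlg (Sum.elim (fun i : {i : J // i ≠ i₀} => P i.1) Q)) σ.symm) :
    (∀ n : ℤ,
      Sep (partAlg (Sum.elim (fun i : {i : J // i ≠ i₀} => P i.1) Q)) σ n =
        Sep (partAlg P) σ n ∪
          ⋃ (k : ℕ) (_ : 0 < k ∧ ¬((k : ℤ) ∣ n)), CtilGen σ Q (P i₀) k) ∧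
    commutant (partAlg (Sum.elim (fun i : {i : J // i ≠ i₀} => P i.1) Q))
        (partAlg (Sum.elim (fun i : {i : J // i ≠ i₀} => P i.1) Q)) σ =
      commutant (partAlg P)
          (partAlg (Sum.elim (fun i : {i : J // i ≠ i₀} => P i.1) Q)) σ \
        {f : ℤ →₀ (X → ℂ) | ∃ n : ℤ, ∃ k : ℕ, 0 < k ∧ ¬((k : ℤ) ∣ n) ∧
          ¬(∀ x ∈ CtilGen σ Q (P i₀) k, f n x = 0)} :=
  statement14_general P hdisj hcover i₀ s Q hQdisj hQcover σ h1 h2 h3 h4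

end PaperTRS
end
end

section
/- Let X, 𝒫, 𝒜, σ be as in the context and define C_∞ := {x ∈ X : for every positive integer k there is no i ∈ J with both x ∈ X_i and σᵏ(x) ∈ X_i}. Let each X_i be refined into finitely many nonempty disjoint subsets and let 𝒫_S be the refined partition, with C_∞^S the corresponding set defined with respect to 𝒫_S. Then C_∞ ⊆ C_∞^S; in particular, if a partition set X_i is contained in C_∞, then every subset of X_i appearing in the refinement is contained in C_∞^S, so refining sets inside C_∞ does not change Sepⁿ on those sets: Sepⁿ_{𝒜_S}(X) ∩ X_i = Sepⁿ_𝒜(X) ∩ X_i for all n. -/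
open scoped Classical

noncomputable section

namespace PaperTRS

/-- `C_∞ ⊆ C_∞^S` for any finite refinement of the partition; in particular,
if `X_i ⊆ C_∞` then every set of the refinement of `X_i` is contained in `C_∞^S`, and
`Sepⁿ_{𝒜_S}(X) ∩ X_i = Sepⁿ_𝒜(X) ∩ X_i` for all `n`. -/
theorem statement16 {X J : Type*} [Countable J] (P : J → Set X)
    (hne : ∀ i, (P i).Nonempty)
    (hdisj : ∀ i j, i ≠ j → Disjoint (P i) (P j))
    (hcover : ⋃ i, P i = Set.univ)
    (s : J → ℕ) (Q : (i : J) → Fin (s i) → Set X)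
    (hQne : ∀ i r, (Q i r).Nonempty)
    (hQdisj : ∀ i, ∀ r r' : Fin (s i), r ≠ r' → Disjoint (Q i r) (Q i r'))
    (hQcover : ∀ i, ⋃ r, Q i r = P i)
    (σ : Equiv.Perm X)
    (h1 : AlgInvariant (partAlg P) σ)
    (h2 : AlgInvariant (partAlg P) σ.symm)
    (h3 : AlgInvariant (partAlg fun q : Σ i : J, Fin (s i) => Q q.1 q.2) σ)
    (h4 : AlgInvariant (partAlg fun q : Σ i : J, Fin (s i) => Q q.1 q.2) σ.symm) :
    Cinf P σ ⊆ Cinf (fun q : Σ i : J, Fin (s i) => Q q.1 q.2) σ ∧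
    ∀ i : J, P i ⊆ Cinf P σ →
      (∀ r : Fin (s i), Q i r ⊆ Cinf (fun q : Σ i : J, Fin (s i) => Q q.1 q.2) σ) ∧
      ∀ n : ℤ,
        Sep (partAlg fun q : Σ i : J, Fin (s i) => Q q.1 q.2) σ n ∩ P i =
          Sep (partAlg P) σ n ∩ P i := by
  have hQsub : ∀ i r, Q i r ⊆ P i := fun i r => (hQcover i) ▸ Set.subset_iUnion _ r
  have hinf : Cinf P σ ⊆ Cinf (fun q : Σ i : J, Fin (s i) => Q q.1 q.2) σ := by
    rintro x hx k hk ⟨q, hxq, hσq⟩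
    exact hx k hk ⟨q.1, hQsub _ _ hxq, hQsub _ _ hσq⟩
  refine ⟨hinf, fun i hPi => ⟨fun r => ((hQsub i r).trans hPi).trans hinf, fun n => ?_⟩⟩
  ext x
  simp only [Set.mem_inter_iff, Sep, Set.mem_setOf_eq]
  constructor
  · rintro ⟨⟨h, hh, hne⟩, hxi⟩
    refine ⟨⟨fun z => if z ∈ P i then (1 : ℂ) else 0, ?_, ?_⟩, hxi⟩
    · intro j a ha b hb
      by_cases hj : j = i
      · subst hj; simp [ha, hb]
      · simp [Set.disjoint_left.mp (hdisj j i hj) ha,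
          Set.disjoint_left.mp (hdisj j i hj) hb]
    · have hyni : ((σ ^ n)⁻¹ x) ∉ P i := by
        intro hy
        rcases lt_trichotomy n 0 with hn | hn | hn
        · refine hPi hxi (-n).toNat (by omega) ⟨i, hxi, ?_⟩
          have : ((σ ^ (-n).toNat : Equiv.Perm X) : X → X) x = (σ ^ n)⁻¹ x := by
            rw [← zpow_natCast, Int.toNat_of_nonneg (by omega), ← zpow_neg]
          rwa [this]
        · subst hn; simp at hne
        · refine hPi hy n.toNat (by omega) ⟨i, hy, ?_⟩
          have : ((σ ^ n.toNat : Equiv.Perm X) : X → X) ((σ ^ n)⁻¹ x) = x := by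
            rw [← zpow_natCast, Int.toNat_of_nonneg (by omega)]
            exact (σ ^ n).apply_symm_apply x
          rwa [this]
      simpa [hxi] using hyni
  · rintro ⟨⟨h, hh, hne⟩, hxi⟩
    refine ⟨⟨h, ?_, hne⟩, hxi⟩
    intro q a ha b hb
    exact hh q.1 a (hQsub _ _ ha) b (hQsub _ _ hb)

end PaperTRS
end
end
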